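/- arXiv:2605.10589 — 6 statements merged into one kernel-verified Lean document; each statement's English description precedes it below -/
import Mathlib

section
/- Let m ≥ 1 be a natural number and let x : Fin m → ℝ be real numbers with x i > -1 for every i, and suppose ∑ i, x i = L where L > 0. Then ∑ i, (x i)^2 / (1 + x i) = L^2 / (m + L) if and only if x i = L / m for every i. -/
/-!
Expanding `f(x) = x² / (1 + x)` around the mean `c` of the `x i` gives
`f(x) = f(c) + f'(c) (x - c) + (x - c)² / ((1 + x) (1 + c)²)` exactly. Summing, the linear terms
cancel, so `∑ f(x i) = m f(c) + ∑ (x i - c)² / ((1 + x i) (1 + c)²)`, where `m f(c) = L² / (m + L)`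
and the remainder is a sum of nonnegative terms, vanishing iff every `x i = c`.
-/

open Finset

lemma sq_div_one_add_eq_taylor {x c : ℝ} (hx : 1 + x ≠ 0) (hc : 1 + c ≠ 0) :
    x ^ 2 / (1 + x) =
      c ^ 2 / (1 + c) + (1 - 1 / (1 + c) ^ 2) * (x - c) + (x - c) ^ 2 / ((1 + x) * (1 + c) ^ 2) := by
  field_simp
  ring

section

variable {ι : Type*} (s : Finset ι) (x : ι → ℝ) {c : ℝ}

lemma sum_sq_div_one_add_eq_card_mul_add (hx : ∀ i ∈ s, 1 + x i ≠ 0) (hc : 1 + c ≠ 0)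
    (hsum : ∑ i ∈ s, x i = #s * c) :
    ∑ i ∈ s, x i ^ 2 / (1 + x i) =
      #s * (c ^ 2 / (1 + c)) + ∑ i ∈ s, (x i - c) ^ 2 / ((1 + x i) * (1 + c) ^ 2) := by
  have hlin : ∑ i ∈ s, (x i - c) = 0 := by simp [sum_sub_distrib, hsum]
  rw [sum_congr rfl fun i hi => sq_div_one_add_eq_taylor (hx i hi) hc, sum_add_distrib,
    sum_add_distrib, ← mul_sum, hlin, sum_const, nsmul_eq_mul]
  ring

lemma sum_sq_sub_div_eq_zero_iff (hx : ∀ i ∈ s, 0 < 1 + x i) (hc : 1 + c ≠ 0) :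
    ∑ i ∈ s, (x i - c) ^ 2 / ((1 + x i) * (1 + c) ^ 2) = 0 ↔ ∀ i ∈ s, x i = c := by
  have hden : ∀ i ∈ s, 0 < (1 + x i) * (1 + c) ^ 2 := fun i hi =>
    mul_pos (hx i hi) (sq_pos_of_ne_zero hc)
  rw [sum_eq_zero_iff_of_nonneg fun i hi => div_nonneg (sq_nonneg _) (hden i hi).le]
  refine forall₂_congr fun i hi => ?_
  rw [div_eq_zero_iff, or_iff_left (hden i hi).ne', sq_eq_zero_iff, sub_eq_zero]

end

theorem sum_sq_div_one_add_eq_iff_general (m : ℕ) (hm : 1 ≤ m) (x : Fin m → ℝ)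
    (hx : ∀ i, x i > -1) (L : ℝ) (hsum : ∑ i, x i = L) :
    ∑ i, (x i) ^ 2 / (1 + x i) = L ^ 2 / (m + L) ↔ ∀ i, x i = L / m := by
  have hm0 : (0 : ℝ) < m := by exact_mod_cast hm
  have hx1 : ∀ i ∈ univ, 0 < 1 + x i := fun i _ => by linarith [hx i]
  have hmL : 0 < m + L := by
    have := sum_lt_sum_of_nonempty (univ_nonempty_iff.mpr ⟨⟨0, hm⟩⟩) fun i _ => hx i
    simp only [sum_const, card_univ, Fintype.card_fin, nsmul_eq_mul, mul_neg, mul_one,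
      hsum] at this
    linarith
  have hc : 1 + L / m ≠ 0 := by
    rw [one_add_div hm0.ne']
    positivity
  have hsum' : ∑ i, x i = #(univ : Finset (Fin m)) * (L / m) := by
    rw [hsum, card_univ, Fintype.card_fin]
    field_simp
  have hmean : (#(univ : Finset (Fin m)) : ℝ) * ((L / m) ^ 2 / (1 + L / m)) = L ^ 2 / (m + L) := by
    rw [card_univ, Fintype.card_fin]
    field_simp
  rw [sum_sq_div_one_add_eq_card_mul_add univ x (fun i hi => (hx1 i hi).ne') hc hsum', hmean,
    add_eq_left, sum_sq_sub_div_eq_zero_iff univ x hx1 hc]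
  simp only [mem_univ, true_implies]

/-- Lemma 2.4 (equality case): under the constraints `x i > -1` and `∑ i, x i = L > 0`,
equality `∑ i, (x i)^2 / (1 + x i) = L^2 / (m + L)` holds iff all `x i = L / m`. -/
theorem sum_sq_div_one_add_eq_iff (m : ℕ) (hm : 1 ≤ m) (x : Fin m → ℝ)
    (hx : ∀ i, x i > -1) (L : ℝ) (hL : L > 0) (hsum : ∑ i, x i = L) :
    ∑ i, (x i) ^ 2 / (1 + x i) = L ^ 2 / (m + L) ↔ ∀ i, x i = L / m :=
  sum_sq_div_one_add_eq_iff_general m hm x hx L hsum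
end

section
/- Let b, β be real numbers with 0 ≤ b ≤ 1 and β ≥ 2, and set c = √(1 - b^2). Define F : ℝ → ℝ by F(s) = b^2 · s/(1-s) - s^2/(1-s) - s^2/(β-1+s). Then for every s ∈ [0,1), F(s) ≤ ((β-1)/β) · (1-c)^2, and in particular F(s) ≤ ((β-1)/β) · b^4. -/
/-! With `b² = 1 - c²`, clearing the positive denominators `β`, `1 - s` and `β - 1 + s` turns the
gap `((β-1)/β)(1-c)² - F(s)` into the perfect square `((β-1+s)(1-c-s) - (1-s)s)²`.
The second bound follows from `0 ≤ 1 - c ≤ 1 - c² = b²`, as `0 ≤ c ≤ 1`. -/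

theorem sos_identity (c β s : ℝ) (hβ : β ≠ 0) (hs : 1 - s ≠ 0) (hβs : β - 1 + s ≠ 0) :
    β * (1 - s) * (β - 1 + s) * ((β - 1) / β * (1 - c) ^ 2 -
        ((1 - c ^ 2) * s / (1 - s) - s ^ 2 / (1 - s) - s ^ 2 / (β - 1 + s))) =
      ((β - 1 + s) * (1 - c - s) - (1 - s) * s) ^ 2 := by
  field_simp
  ring

theorem le_of_sos_identity (c β s : ℝ) (hβ : 0 < β) (hs : s < 1) (hβs : 0 < β - 1 + s) :
    (1 - c ^ 2) * s / (1 - s) - s ^ 2 / (1 - s) - s ^ 2 / (β - 1 + s) ≤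
      (β - 1) / β * (1 - c) ^ 2 := by
  have hs' : 0 < 1 - s := sub_pos.mpr hs
  have key := sos_identity c β s hβ.ne' hs'.ne' hβs.ne'
  have : 0 ≤ (β - 1) / β * (1 - c) ^ 2 -
      ((1 - c ^ 2) * s / (1 - s) - s ^ 2 / (1 - s) - s ^ 2 / (β - 1 + s)) :=
    nonneg_of_mul_nonneg_right (key ▸ sq_nonneg _) (by positivity)
  linarith

theorem sq_one_sub_sqrt_one_sub_sq_le {b : ℝ} (hb : b ^ 2 ≤ 1) :
    (1 - √(1 - b ^ 2)) ^ 2 ≤ b ^ 4 := by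
  have hc0 := Real.sqrt_nonneg (1 - b ^ 2)
  have hc1 : √(1 - b ^ 2) ≤ 1 := Real.sqrt_le_one.mpr (by linarith [sq_nonneg b])
  have hc2 : √(1 - b ^ 2) ^ 2 = 1 - b ^ 2 := Real.sq_sqrt (sub_nonneg.mpr hb)
  calc (1 - √(1 - b ^ 2)) ^ 2 ≤ (b ^ 2) ^ 2 := by gcongr; nlinarith
    _ = b ^ 4 := by ring

/-- Lemma 2.6 (upper-bound part): for `0 ≤ b ≤ 1`, `β ≥ 2`, `c = √(1 - b²)` and
`F(s) = b²·s/(1-s) - s²/(1-s) - s²/(β-1+s)`, every `s ∈ [0,1)` satisfies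
`F(s) ≤ ((β-1)/β)(1-c)²` and in particular `F(s) ≤ ((β-1)/β) b⁴`. -/
theorem F_le_sup (b β : ℝ) (hb0 : 0 ≤ b) (hb1 : b ≤ 1) (hβ : 2 ≤ β)
    (c : ℝ) (hc : c = Real.sqrt (1 - b ^ 2))
    (F : ℝ → ℝ)
    (hF : ∀ s, F s = b ^ 2 * s / (1 - s) - s ^ 2 / (1 - s) - s ^ 2 / (β - 1 + s)) :
    ∀ s ∈ Set.Ico (0 : ℝ) 1,
      F s ≤ ((β - 1) / β) * (1 - c) ^ 2 ∧ F s ≤ ((β - 1) / β) * b ^ 4 := by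
  rintro s ⟨hs0, hs1⟩
  have hb2 : b ^ 2 ≤ 1 := pow_le_one₀ hb0 hb1
  have hcb : b ^ 2 = 1 - c ^ 2 := by rw [hc, Real.sq_sqrt (sub_nonneg.mpr hb2)]; ring
  have hmain : F s ≤ (β - 1) / β * (1 - c) ^ 2 := by
    rw [hF, hcb]
    exact le_of_sos_identity c β s (by linarith) hs1 (by linarith)
  refine ⟨hmain, hmain.trans ?_⟩
  have hβ' : 0 ≤ (β - 1) / β := div_nonneg (by linarith) (by linarith)
  exact mul_le_mul_of_nonneg_left (hc ▸ sq_one_sub_sqrt_one_sub_sq_le hb2) hβ'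
end

section
/- Let b, β be real numbers with 0 ≤ b < 1 and β ≥ 2, and set c = √(1 - b^2) and s₀ = (β-1)·(1-c)/(β-1+c). Define F(s) = b^2 · s/(1-s) - s^2/(1-s) - s^2/(β-1+s). Then s₀ ∈ [0,1), F(s₀) = ((β-1)/β) · (1-c)^2, and F(s) ≤ F(s₀) for every s ∈ [0,1); that is, the supremum of F over [0,1) equals ((β-1)/β)(1-c)^2 and is attained at s₀. -/
/-! With `b² = 1 - c²`, clearing denominators turns the gap between the claimed maximum
`M = ((β-1)/β)(1-c)²` and `F s` into a perfect square:
`β (M - F s)(1-s)(β-1+s) = ((β-1+c) s - (β-1)(1-c))²`.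
On `[0,1)` the factor `β (1-s)(β-1+s)` is positive, so `F ≤ M`, with equality exactly at the root
`s₀` of the square. -/

namespace FMaxAttained

variable {b c β s : ℝ}

theorem max_sub_eq_sq_div (hbc : b ^ 2 + c ^ 2 = 1) (hβ : β ≠ 0) (h1 : 1 - s ≠ 0)
    (h2 : β - 1 + s ≠ 0) :
    (β - 1) / β * (1 - c) ^ 2 - (b ^ 2 * s / (1 - s) - s ^ 2 / (1 - s) - s ^ 2 / (β - 1 + s)) =
      ((β - 1 + c) * s - (β - 1) * (1 - c)) ^ 2 / (β * ((1 - s) * (β - 1 + s))) := by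
  rw [show b ^ 2 = 1 - c ^ 2 by linarith]
  field_simp
  ring

theorem le_max_of_mem_Ico (hbc : b ^ 2 + c ^ 2 = 1) (hβ : 1 < β) (hs : s ∈ Set.Ico (0 : ℝ) 1) :
    b ^ 2 * s / (1 - s) - s ^ 2 / (1 - s) - s ^ 2 / (β - 1 + s) ≤ (β - 1) / β * (1 - c) ^ 2 := by
  obtain ⟨hs0, hs1⟩ := hs
  have hgap := max_sub_eq_sq_div hbc (β := β) (s := s) (by positivity) (by linarith) (by linarith)
  have hden : 0 < β * ((1 - s) * (β - 1 + s)) :=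
    mul_pos (by linarith) (mul_pos (by linarith) (by linarith))
  linarith [div_nonneg (sq_nonneg ((β - 1 + c) * s - (β - 1) * (1 - c))) hden.le]

theorem eq_max_of_root (hbc : b ^ 2 + c ^ 2 = 1) (hβ : 1 < β) (hs : s ∈ Set.Ico (0 : ℝ) 1)
    (hroot : (β - 1 + c) * s = (β - 1) * (1 - c)) :
    b ^ 2 * s / (1 - s) - s ^ 2 / (1 - s) - s ^ 2 / (β - 1 + s) = (β - 1) / β * (1 - c) ^ 2 := by
  have hgap := max_sub_eq_sq_div hbc (β := β) (s := s) (by positivity) (by linarith [hs.2])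
    (by linarith [hs.1])
  rw [hroot, sub_self, zero_pow two_ne_zero, zero_div] at hgap
  linarith

theorem critical_point_mem_Ico (hc0 : 0 < c) (hc1 : c ≤ 1) (hβ : 1 < β) :
    (β - 1) * (1 - c) / (β - 1 + c) ∈ Set.Ico (0 : ℝ) 1 := by
  have hden : 0 < β - 1 + c := by linarith
  refine ⟨div_nonneg (mul_nonneg (by linarith) (by linarith)) hden.le, ?_⟩
  rw [div_lt_one hden]
  nlinarith

end FMaxAttained

open FMaxAttained in
/-- Lemma 2.6 (exact-supremum part): for `0 ≤ b < 1`, `β ≥ 2`, `c = √(1 - b²)` and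
`s₀ = (β-1)(1-c)/(β-1+c)`, the function `F(s) = b²·s/(1-s) - s²/(1-s) - s²/(β-1+s)`
attains its maximum over `[0,1)` at `s₀`, with value `((β-1)/β)(1-c)²`. -/
theorem F_max_attained (b β : ℝ) (hb0 : 0 ≤ b) (hb1 : b < 1) (hβ : 2 ≤ β)
    (c : ℝ) (hc : c = Real.sqrt (1 - b ^ 2))
    (s₀ : ℝ) (hs₀ : s₀ = (β - 1) * (1 - c) / (β - 1 + c))
    (F : ℝ → ℝ)
    (hF : ∀ s, F s = b ^ 2 * s / (1 - s) - s ^ 2 / (1 - s) - s ^ 2 / (β - 1 + s)) :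
    s₀ ∈ Set.Ico (0 : ℝ) 1 ∧
      F s₀ = ((β - 1) / β) * (1 - c) ^ 2 ∧
      ∀ s ∈ Set.Ico (0 : ℝ) 1, F s ≤ F s₀ := by
  have hb2 : 0 < 1 - b ^ 2 := by nlinarith
  have hc0 : 0 < c := hc ▸ Real.sqrt_pos.mpr hb2
  have hc1 : c ≤ 1 := hc ▸ Real.sqrt_le_one.mpr (by nlinarith)
  have hbc : b ^ 2 + c ^ 2 = 1 := by rw [hc, Real.sq_sqrt hb2.le]; ring
  have hβ1 : 1 < β := by linarith
  have hs₀mem : s₀ ∈ Set.Ico (0 : ℝ) 1 := hs₀ ▸ critical_point_mem_Ico hc0 hc1 hβ1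
  have hFs₀ : F s₀ = (β - 1) / β * (1 - c) ^ 2 := by
    rw [hF]
    exact eq_max_of_root hbc hβ1 hs₀mem (hs₀ ▸ mul_div_cancel₀ _ (by linarith))
  refine ⟨hs₀mem, hFs₀, fun s hs => ?_⟩
  rw [hFs₀, hF]
  exact le_max_of_mem_Ico hbc hβ1 hs
end

section
/- Let b, s be real numbers with b^2 ≤ 1 and 0 ≤ s < 1, and set c = √(1 - b^2). Then s^2/(1-s) - b^2 · s/(1-s) ≥ -(1-c)^2. -/
/-- Lemma 8.1: for `b² ≤ 1`, `0 ≤ s < 1` and `c = √(1 - b²)`,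
`s²/(1-s) - b²·s/(1-s) ≥ -(1-c)²`. -/
theorem key_two_flows_ineq (b s : ℝ) (hb : b ^ 2 ≤ 1) (hs0 : 0 ≤ s) (hs1 : s < 1)
    (c : ℝ) (hc : c = Real.sqrt (1 - b ^ 2)) :
    s ^ 2 / (1 - s) - b ^ 2 * s / (1 - s) ≥ -(1 - c) ^ 2 := by
  have h1s : 0 < 1 - s := by linarith
  have hc2 : c ^ 2 = 1 - b ^ 2 := by
    rw [hc, Real.sq_sqrt (by linarith)]
  rw [ge_iff_le, div_sub_div_same, le_div_iff₀ h1s]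
  nlinarith [sq_nonneg (s - 1 + c)]
end

section
/- Let n ≥ 2 be a natural number, r > 0 a real number, and set λ = 1/(16(n-1)^2) and s = √λ · r. Work in EuclideanSpace ℝ (Fin (n+1)), with coordinates x = (x_1, …, x_{n+1}). Let p be the point whose coordinates x_1, …, x_{n-1} and x_{n+1} all vanish and whose n-th coordinate p_n satisfies (λ - 1)·r ≤ p_n ≤ (2λ - 1)·r. Then every point x with ‖x - p‖ ≥ r and ‖x‖ ≤ s has x_n > 0. -/
/-!
Write `p = a • e` with `e` the `n`-th unit vector, so `(λ - 1) r ≤ a ≤ (2λ - 1) r < 0`. Expanding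
`r² ≤ ‖x - a • e‖² = ‖x‖² - 2 a xₙ + a²` and using `‖x‖² ≤ λ r²` gives
`-2 a xₙ ≥ (1 - λ) r² - a² ≥ (1 - λ) r² - (1 - λ)² r² > 0`, hence `xₙ > 0` because `a < 0`.
-/

open scoped RealInnerProductSpace

lemma sq_lt_one_sub_mul_sq_of_le_of_neg {lam r a : ℝ} (hr : 0 < r) (hlam₀ : 0 < lam)
    (hlam₁ : lam < 1) (ha₁ : (lam - 1) * r ≤ a) (ha₂ : a < 0) :
    a ^ 2 < (1 - lam) * r ^ 2 := by
  nlinarith [mul_pos hlam₀ (mul_pos hr hr), mul_pos (sub_pos.2 hlam₁) (mul_pos hr hr)]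

lemma inner_pos_of_le_norm_sub_smul {E : Type*} [NormedAddCommGroup E] [InnerProductSpace ℝ E]
    {x u : E} {a r lam : ℝ} (hu : ‖u‖ = 1) (hr : 0 < r) (hlam₀ : 0 < lam) (hlam₁ : lam < 1 / 2)
    (ha₁ : (lam - 1) * r ≤ a) (ha₂ : a ≤ (2 * lam - 1) * r)
    (hxa : r ≤ ‖x - a • u‖) (hx : ‖x‖ ^ 2 ≤ lam * r ^ 2) :
    0 < ⟪x, u⟫ := by
  have ha_neg : a < 0 := ha₂.trans_lt (by nlinarith)
  have ha_sq := sq_lt_one_sub_mul_sq_of_le_of_neg hr hlam₀ (by linarith) ha₁ ha_neg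
  have hexpand : ‖x - a • u‖ ^ 2 = ‖x‖ ^ 2 - 2 * (a * ⟪x, u⟫) + a ^ 2 := by
    rw [norm_sub_sq_real, inner_smul_right, norm_smul, mul_pow, Real.norm_eq_abs, sq_abs, hu,
      one_pow, mul_one]
  have hr_sq : r ^ 2 ≤ ‖x - a • u‖ ^ 2 := pow_le_pow_left₀ hr.le hxa 2
  have hprod : a * ⟪x, u⟫ < 0 := by nlinarith
  exact pos_of_mul_neg_right hprod ha_neg.le

lemma one_div_sixteen_mul_sq_lt_half {m : ℝ} (hm : 1 ≤ m) : 1 / (16 * m ^ 2) < 1 / 2 := by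
  rw [div_lt_div_iff₀ (by positivity) (by norm_num)]
  nlinarith

lemma EuclideanSpace.eq_smul_single_of_forall_ne {ι : Type*} [Fintype ι] [DecidableEq ι]
    {p : EuclideanSpace ℝ ι} {j : ι} (hp : ∀ i, i ≠ j → p i = 0) :
    p = p j • EuclideanSpace.single j 1 := by
  ext i
  by_cases hij : i = j
  · subst hij; simp
  · simp [hij, hp i hij]

/-- The computational core of Lemma 5.3 (1): with `λ = 1/(16(n-1)²)`, `s = √λ · r`, and
`p` the point of `ℝ^{n+1}` whose only (possibly) nonzero coordinate is the `n`-th one,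
with `(λ-1)r ≤ p_n ≤ (2λ-1)r`, every point `x` with `‖x - p‖ ≥ r` and `‖x‖ ≤ s`
has positive `n`-th coordinate.  (Coordinates are indexed by `Fin (n+1)`, so the
`n`-th coordinate of the paper corresponds to index `n - 1` and the `(n+1)`-st to
index `n`.) -/
theorem quarter_space (n : ℕ) (hn : 2 ≤ n) (r : ℝ) (hr : 0 < r)
    (lam s : ℝ) (hlam : lam = 1 / (16 * ((n : ℝ) - 1) ^ 2))
    (hs : s = Real.sqrt lam * r)
    (p : EuclideanSpace ℝ (Fin (n + 1)))
    (hp0 : ∀ i : Fin (n + 1), (i : ℕ) ≠ n - 1 → p i = 0)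
    (hpn1 : (lam - 1) * r ≤ p ⟨n - 1, by omega⟩)
    (hpn2 : p ⟨n - 1, by omega⟩ ≤ (2 * lam - 1) * r)
    (x : EuclideanSpace ℝ (Fin (n + 1)))
    (hx1 : r ≤ ‖x - p‖) (hx2 : ‖x‖ ≤ s) :
    0 < x ⟨n - 1, by omega⟩ := by
  set j : Fin (n + 1) := ⟨n - 1, by omega⟩
  have hm : 1 ≤ (n : ℝ) - 1 := by
    have : (2 : ℝ) ≤ n := by exact_mod_cast hn
    linarith
  have hlam₀ : 0 < lam := hlam ▸ one_div_pos.2 (by positivity)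
  have hlam₁ : lam < 1 / 2 := hlam ▸ one_div_sixteen_mul_sq_lt_half hm
  have hp : p = p j • EuclideanSpace.single j 1 :=
    EuclideanSpace.eq_smul_single_of_forall_ne fun i hi => hp0 i fun h => hi (Fin.ext h)
  have hx : ‖x‖ ^ 2 ≤ lam * r ^ 2 := by
    calc ‖x‖ ^ 2 ≤ s ^ 2 := pow_le_pow_left₀ (norm_nonneg x) hx2 2
      _ = lam * r ^ 2 := by rw [hs, mul_pow, Real.sq_sqrt hlam₀.le]
  have key := inner_pos_of_le_norm_sub_smul (by simp) hr hlam₀ hlam₁ hpn1 hpn2 (hp ▸ hx1) hx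
  simpa [EuclideanSpace.inner_single_right] using key
end

section
/- Let u : EuclideanSpace ℝ (Fin 2) → ℝ be a twice continuously differentiable function (ContDiff ℝ 2 u) such that u(x) > 0 for every x and the Laplacian satisfies Δu(x) ≤ 0 for every x. Then u is constant. -/
/-!
Fix a centre `c` and let `Φ(r) = r ∫ ∂ᵣf(c + r e^{iθ}) dθ` be the flux of `f` through the circle
of radius `r`. In polar coordinates `Φ'(r) = r ∫ Δf(c + r e^{iθ}) dθ ≤ 0` (the angular part of
the Laplacian integrates to zero over a period), and `Φ(0) = 0`, so `Φ ≤ 0` on `[0, ∞)`.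
Since `Φ(r) / r` is the derivative of the circle integral `M(r) = ∫ f(c + r e^{iθ}) dθ`, a value
`Φ(r₀) < 0` would give `M(r) ≤ M(r₀) + Φ(r₀) log (r / r₀) → -∞`, against the lower bound of `f`:
this is the parabolicity of the plane. Hence `Φ ≡ 0`, so `Δf` integrates to zero on every circle
and, letting `r → 0`, `Δf = 0`. A harmonic function on `ℂ` is the real part of an entire
function `F`, and if it is bounded below then `exp (-F)` is bounded, hence constant.
-/

/-- The Laplacian of a function on the Euclidean plane: the trace of the second
derivative in the standard orthonormal basis. -/
noncomputable def planeLaplacian (u : EuclideanSpace ℝ (Fin 2) → ℝ)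
    (x : EuclideanSpace ℝ (Fin 2)) : ℝ :=
  ∑ i : Fin 2,
    iteratedFDeriv ℝ 2 u x ![EuclideanSpace.single i 1, EuclideanSpace.single i 1]

open Real MeasureTheory Filter Topology Set Function InnerProductSpace Laplacian
open Complex (I)

theorem hasDerivAt_intervalIntegral_of_continuous {E : Type*} [NormedAddCommGroup E]
    [NormedSpace ℝ E] {F F' : ℝ → ℝ → E} (hF : Continuous (uncurry F))
    (hF' : Continuous (uncurry F')) (hderiv : ∀ s t, HasDerivAt (F · t) (F' s t) s)
    (a b s₀ : ℝ) :
    HasDerivAt (fun s => ∫ t in a..b, F s t) (∫ t in a..b, F' s₀ t) s₀ := by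
  obtain ⟨C, hC⟩ := ((isCompact_closedBall s₀ 1).prod (isCompact_uIcc (a := a) (b := b)))
    |>.exists_bound_of_continuousOn hF'.continuousOn
  refine (intervalIntegral.hasDerivAt_integral_of_dominated_loc_of_deriv_le (bound := fun _ => C)
    (Metric.closedBall_mem_nhds s₀ one_pos) ?_ ?_ ?_ ?_ intervalIntegrable_const ?_).2
  · exact Eventually.of_forall fun s => (hF.comp (Continuous.prodMk_right s)).aestronglyMeasurable
  · exact (hF.comp (Continuous.prodMk_right s₀)).intervalIntegrable _ _
  · exact (hF'.comp (Continuous.prodMk_right s₀)).aestronglyMeasurable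
  · exact ae_of_all _ fun t ht s hs => hC (s, t) ⟨hs, uIoc_subset_uIcc ht⟩
  · exact ae_of_all _ fun t _ s _ => hderiv s t

theorem laplacian_comp_linearIsometryEquiv {E F G : Type*} [NormedAddCommGroup E]
    [InnerProductSpace ℝ E] [FiniteDimensional ℝ E] [NormedAddCommGroup F]
    [InnerProductSpace ℝ F] [FiniteDimensional ℝ F] [NormedAddCommGroup G] [NormedSpace ℝ G]
    (L : E ≃ₗᵢ[ℝ] F) (f : F → G) (x : E) :
    Δ (f ∘ L) x = Δ f (L x) := by
  let b := stdOrthonormalBasis ℝ E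
  rw [laplacian_eq_iteratedFDeriv_orthonormalBasis _ b,
    laplacian_eq_iteratedFDeriv_orthonormalBasis _ (b.map L)]
  refine Finset.sum_congr rfl fun i _ => ?_
  have h := L.toContinuousLinearEquiv.iteratedFDerivWithin_comp_right f uniqueDiffOn_univ
    (mem_univ (L x)) 2
  simp only [preimage_univ, iteratedFDerivWithin_univ] at h
  rw [show f ∘ L = f ∘ L.toContinuousLinearEquiv from rfl, h]
  simp only [ContinuousMultilinearMap.compContinuousLinearMap_apply, OrthonormalBasis.map_apply]
  congr 1
  ext j
  fin_cases j <;> rfl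

theorem continuous_laplacian {E F : Type*} [NormedAddCommGroup E]
    [InnerProductSpace ℝ E] [FiniteDimensional ℝ E] [NormedAddCommGroup F] [NormedSpace ℝ F]
    {f : E → F} (hf : ContDiff ℝ 2 f) : Continuous (Δ f) := by
  rw [laplacian_eq_iteratedFDeriv_stdOrthonormalBasis]
  have := hf.continuous_iteratedFDeriv (m := 2) le_rfl
  fun_prop

theorem hasDerivAt_circleMap_radius (c : ℂ) (r θ : ℝ) :
    HasDerivAt (fun r => circleMap c r θ) (circleMap 0 1 θ) r := by
  simpa [circleMap] using ((hasDerivAt_id r).ofReal_comp.mul_const _).const_add c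

theorem laplacian_eq_fderiv_fderiv_circle {F : Type*} [NormedAddCommGroup F] [NormedSpace ℝ F]
    (f : ℂ → F) (a : Circle) (z : ℂ) :
    Δ f z = fderiv ℝ (fderiv ℝ f) z a a + fderiv ℝ (fderiv ℝ f) z (a * I) (a * I) := by
  rw [laplacian_eq_iteratedFDeriv_orthonormalBasis f
    (Complex.orthonormalBasisOneI.map (rotation a))]
  simp [Fin.sum_univ_two, iteratedFDeriv_two_apply, rotation_apply]

section CircleFlux

variable {f : ℂ → ℝ}

noncomputable def circleFlux (f : ℂ → ℝ) (c : ℂ) (r : ℝ) : ℝ :=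
  r * ∫ θ in 0..2 * π, fderiv ℝ f (circleMap c r θ) (circleMap 0 1 θ)

theorem hasDerivAt_integral_comp_circleMap_radius (hf : ContDiff ℝ 2 f) (c : ℂ) (r : ℝ) :
    HasDerivAt (fun r => ∫ θ in 0..2 * π, f (circleMap c r θ))
      (∫ θ in 0..2 * π, fderiv ℝ f (circleMap c r θ) (circleMap 0 1 θ)) r := by
  have := hf.continuous_fderiv two_ne_zero
  have hderiv (s θ : ℝ) : HasDerivAt (fun r => f (circleMap c r θ))
      (fderiv ℝ f (circleMap c s θ) (circleMap 0 1 θ)) s :=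
    (hf.differentiable two_ne_zero _).hasFDerivAt.comp_hasDerivAt s
      (hasDerivAt_circleMap_radius c s θ)
  exact hasDerivAt_intervalIntegral_of_continuous (by fun_prop) (by fun_prop) hderiv _ _ r

theorem hasDerivAt_integral_fderiv_circleMap_radius (hf : ContDiff ℝ 2 f) (c : ℂ) (r : ℝ) :
    HasDerivAt (fun r => ∫ θ in 0..2 * π, fderiv ℝ f (circleMap c r θ) (circleMap 0 1 θ))
      (∫ θ in 0..2 * π,
        fderiv ℝ (fderiv ℝ f) (circleMap c r θ) (circleMap 0 1 θ) (circleMap 0 1 θ)) r := by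
  have hf' : ContDiff ℝ 1 (fderiv ℝ f) := hf.fderiv_right le_rfl
  have := hf'.continuous_fderiv one_ne_zero
  have := hf.continuous_fderiv two_ne_zero
  have hderiv (s θ : ℝ) : HasDerivAt (fun r => fderiv ℝ f (circleMap c r θ) (circleMap 0 1 θ))
      (fderiv ℝ (fderiv ℝ f) (circleMap c s θ) (circleMap 0 1 θ) (circleMap 0 1 θ)) s := by
    simpa using ((hf'.differentiable one_ne_zero _).hasFDerivAt.comp_hasDerivAt s
      (hasDerivAt_circleMap_radius c s θ)).clm_apply (hasDerivAt_const _ (circleMap 0 1 θ))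
  exact hasDerivAt_intervalIntegral_of_continuous (by fun_prop) (by fun_prop) hderiv _ _ r

theorem integral_fderiv_circleMap_eq (hf : ContDiff ℝ 2 f) (c : ℂ) (r : ℝ) :
    ∫ θ in 0..2 * π, fderiv ℝ f (circleMap c r θ) (circleMap 0 1 θ) =
      r * ∫ θ in 0..2 * π,
        fderiv ℝ (fderiv ℝ f) (circleMap c r θ) (circleMap 0 1 θ * I) (circleMap 0 1 θ * I) := by
  have hf' : ContDiff ℝ 1 (fderiv ℝ f) := hf.fderiv_right le_rfl
  have := hf'.continuous_fderiv one_ne_zero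
  have := hf.continuous_fderiv two_ne_zero
  have hderiv (θ : ℝ) :
      HasDerivAt (fun φ => fderiv ℝ f (circleMap c r φ) (circleMap 0 1 φ * I))
      (r * fderiv ℝ (fderiv ℝ f) (circleMap c r θ) (circleMap 0 1 θ * I) (circleMap 0 1 θ * I)
        - fderiv ℝ f (circleMap c r θ) (circleMap 0 1 θ)) θ := by
    have h := ((hf'.differentiable one_ne_zero _).hasFDerivAt.comp_hasDerivAt θ
      (hasDerivAt_circleMap c r θ)).clm_apply ((hasDerivAt_circleMap 0 1 θ).mul_const I)
    refine h.congr_deriv ?_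
    have hrad : circleMap 0 r θ * I = r • (circleMap 0 1 θ * I) := by
      simp [circleMap_zero, Complex.real_smul, mul_assoc]
    have hrot : circleMap 0 1 θ * I * I = -circleMap 0 1 θ := by
      rw [mul_assoc, Complex.I_mul_I, mul_neg_one]
    simp only [comp_apply, hrad, hrot, map_smul, map_neg, smul_apply,
      smul_eq_mul, sub_eq_add_neg]
  have hperiodic := intervalIntegral.integral_eq_sub_of_hasDerivAt (fun θ _ => hderiv θ)
    (Continuous.intervalIntegrable (by fun_prop) 0 (2 * π))
  rw [intervalIntegral.integral_sub (Continuous.intervalIntegrable (by fun_prop) _ _)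
    (Continuous.intervalIntegrable (by fun_prop) _ _), intervalIntegral.integral_const_mul]
    at hperiodic
  have h2π (z : ℂ) (ρ : ℝ) : circleMap z ρ (2 * π) = circleMap z ρ 0 := by
    simpa using periodic_circleMap z ρ 0
  simp only [h2π, sub_self] at hperiodic
  linarith

theorem hasDerivAt_circleFlux (hf : ContDiff ℝ 2 f) (c : ℂ) (r : ℝ) :
    HasDerivAt (circleFlux f c) (r * ∫ θ in 0..2 * π, Δ f (circleMap c r θ)) r := by
  have hf' : ContDiff ℝ 1 (fderiv ℝ f) := hf.fderiv_right le_rfl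
  have := hf'.continuous_fderiv one_ne_zero
  have hΔ (θ : ℝ) : Δ f (circleMap c r θ) =
      fderiv ℝ (fderiv ℝ f) (circleMap c r θ) (circleMap 0 1 θ) (circleMap 0 1 θ) +
        fderiv ℝ (fderiv ℝ f) (circleMap c r θ) (circleMap 0 1 θ * I) (circleMap 0 1 θ * I) := by
    simpa [circleMap_zero] using laplacian_eq_fderiv_fderiv_circle f (Circle.exp θ) _
  refine ((hasDerivAt_id r).mul
    (hasDerivAt_integral_fderiv_circleMap_radius hf c r)).congr_deriv ?_
  rw [integral_fderiv_circleMap_eq hf c r, intervalIntegral.integral_congr fun θ _ => hΔ θ,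
    intervalIntegral.integral_add (Continuous.intervalIntegrable (by fun_prop) _ _)
      (Continuous.intervalIntegrable (by fun_prop) _ _)]
  simp only [id_eq]
  ring

theorem antitoneOn_circleFlux (hf : ContDiff ℝ 2 f) (c : ℂ) (hΔ : ∀ z, Δ f z ≤ 0) :
    AntitoneOn (circleFlux f c) (Ici 0) := by
  refine antitoneOn_of_hasDerivWithinAt_nonpos (convex_Ici 0)
    (fun r _ => (hasDerivAt_circleFlux hf c r).continuousAt.continuousWithinAt)
    (fun r _ => (hasDerivAt_circleFlux hf c r).hasDerivWithinAt) fun r hr => ?_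
  rw [interior_Ici, mem_Ioi] at hr
  have h := intervalIntegral.integral_nonneg_of_forall (μ := volume) two_pi_pos.le
    fun θ => neg_nonneg.2 (hΔ (circleMap c r θ))
  rw [intervalIntegral.integral_neg, neg_nonneg] at h
  exact mul_nonpos_of_nonneg_of_nonpos hr.le h

theorem circleFlux_nonpos (hf : ContDiff ℝ 2 f) (c : ℂ)
    (hΔ : ∀ z, Δ f z ≤ 0) {r : ℝ} (hr : 0 ≤ r) : circleFlux f c r ≤ 0 :=
  (antitoneOn_circleFlux hf c hΔ self_mem_Ici hr hr).trans_eq (by simp [circleFlux])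

theorem circleFlux_eq_zero (hf : ContDiff ℝ 2 f) (c : ℂ)
    (hΔ : ∀ z, Δ f z ≤ 0) (hbdd : BddBelow (range f)) {r₀ : ℝ} (hr₀ : 0 ≤ r₀) :
    circleFlux f c r₀ = 0 := by
  refine (circleFlux_nonpos hf c hΔ hr₀).antisymm (not_lt.1 fun hneg => ?_)
  obtain ⟨m, hm⟩ := hbdd
  set Φ := circleFlux f c r₀
  set M := fun r => ∫ θ in 0..2 * π, f (circleMap c r θ)
  have hr₀pos : 0 < r₀ := hr₀.lt_of_ne (by rintro rfl; simp [Φ, circleFlux] at hneg)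
  have hanti : AntitoneOn (fun r => M r - Φ * log r) (Ici r₀) := by
    have hderiv {r : ℝ} (hr : 0 < r) := (hasDerivAt_integral_comp_circleMap_radius hf c r).sub
      ((hasDerivAt_log hr.ne').const_mul Φ)
    refine antitoneOn_of_hasDerivWithinAt_nonpos (convex_Ici r₀)
      (fun r hr => (hderiv (hr₀pos.trans_le hr)).continuousAt.continuousWithinAt)
      (fun r hr => (hderiv (hr₀pos.trans_le (interior_subset hr))).hasDerivWithinAt) fun r hr => ?_
    rw [interior_Ici, mem_Ioi] at hr
    have hflux : r * _ ≤ Φ := antitoneOn_circleFlux hf c hΔ hr₀ (hr₀.trans hr.le) hr.le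
    rw [sub_nonpos, ← div_eq_mul_inv, le_div_iff₀ (hr₀pos.trans hr), mul_comm]
    exact hflux
  have hlower (b : ℝ) : 2 * π * m ≤ M b := by
    have h := intervalIntegral.integral_mono_on two_pi_pos.le
      (intervalIntegrable_const (μ := volume))
      ((hf.continuous.comp (continuous_circleMap c b)).intervalIntegrable _ _)
      fun θ _ => hm ⟨circleMap c b θ, rfl⟩
    simpa using h
  have htendsto : Tendsto (fun b => M r₀ - Φ * log r₀ + Φ * log b) atTop atBot :=
    tendsto_atBot_add_const_left _ _ (tendsto_log_atTop.const_mul_atTop_of_neg hneg)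
  obtain ⟨b, hb, hr₀b⟩ :=
    ((htendsto.eventually_lt_atBot (2 * π * m)).and (eventually_ge_atTop r₀)).exists
  have := hanti self_mem_Ici hr₀b hr₀b
  linarith [hlower b]

theorem laplacian_eq_zero_of_bddBelow (hf : ContDiff ℝ 2 f) (c : ℂ)
    (hΔ : ∀ z, Δ f z ≤ 0) (hbdd : BddBelow (range f)) : Δ f c = 0 := by
  set J := fun r => ∫ θ in 0..2 * π, Δ f (circleMap c r θ)
  have hJ {r : ℝ} (hr : 0 < r) : J r = 0 := by
    have hconst : circleFlux f c =ᶠ[𝓝 r] fun _ => 0 :=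
      eventually_of_mem (Ioi_mem_nhds hr) fun s hs => circleFlux_eq_zero hf c hΔ hbdd hs.le
    have h := (hasDerivAt_circleFlux hf c r).unique
      ((hasDerivAt_const r (0 : ℝ)).congr_of_eventuallyEq hconst)
    exact (mul_eq_zero.1 h).resolve_left hr.ne'
  have hcont : Continuous J := by
    have := continuous_laplacian hf
    exact intervalIntegral.continuous_parametric_intervalIntegral_of_continuous'
      (f := fun r θ => Δ f (circleMap c r θ)) (by fun_prop) _ _
  have hJ0 : J 0 = 0 := tendsto_nhds_unique (l := 𝓝[>] (0 : ℝ))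
    (hcont.tendsto 0 |>.mono_left nhdsWithin_le_nhds)
    (tendsto_const_nhds.congr' (eventually_nhdsWithin_of_forall fun r hr => (hJ hr).symm))
  simpa [J, circleMap_zero_radius, two_pi_pos.ne'] using hJ0

end CircleFlux

theorem harmonicOnNhd_of_laplacian_nonpos_of_bddBelow {f : ℂ → ℝ} (hf : ContDiff ℝ 2 f)
    (hΔ : ∀ z, Δ f z ≤ 0) (hbdd : BddBelow (range f)) : HarmonicOnNhd f univ :=
  fun _ _ =>
    ⟨hf.contDiffAt, Eventually.of_forall fun c => laplacian_eq_zero_of_bddBelow hf c hΔ hbdd⟩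

theorem InnerProductSpace.HarmonicOnNhd.apply_eq_apply_of_bddBelow {f : ℂ → ℝ}
    (hf : HarmonicOnNhd f univ) (hbdd : BddBelow (range f)) (z w : ℂ) : f z = f w := by
  obtain ⟨F, hF, hre⟩ := hf.exists_analyticOnNhd_univ_re_eq
  obtain ⟨m, hm⟩ := hbdd
  have hexp : Complex.exp (-F z) = Complex.exp (-F w) := by
    refine Differentiable.apply_eq_apply_of_bounded
      (Complex.differentiable_exp.comp fun x => (hF x (mem_univ x)).differentiableAt.neg) ?_ _ _
    refine isBounded_iff_forall_norm_le.2 ⟨Real.exp (-m), ?_⟩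
    rintro _ ⟨x, rfl⟩
    rw [comp_apply, Pi.neg_apply, Complex.norm_exp, Complex.neg_re, Real.exp_le_exp,
      neg_le_neg_iff, congrFun hre x]
    exact hm ⟨x, rfl⟩
  have := congrArg (‖·‖) hexp
  simpa [Complex.norm_exp, ← congrFun hre] using this

theorem planeLaplacian_eq_laplacian (u : EuclideanSpace ℝ (Fin 2) → ℝ) :
    planeLaplacian u = Δ u := by
  rw [laplacian_eq_iteratedFDeriv_orthonormalBasis u (EuclideanSpace.basisFun (Fin 2) ℝ)]
  ext x
  simp [planeLaplacian]

/-- Lemma 4.2 (smooth case): a positive `C²` superharmonic function on the plane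
is constant. -/
theorem positive_superharmonic_constant (u : EuclideanSpace ℝ (Fin 2) → ℝ)
    (hu : ContDiff ℝ 2 u) (hpos : ∀ x, 0 < u x)
    (hsuper : ∀ x, planeLaplacian u x ≤ 0) :
    ∀ x y, u x = u y := by
  let L := Complex.orthonormalBasisOneI.repr
  have hv : ContDiff ℝ 2 (u ∘ L) := hu.comp L.contDiff
  have hΔ (z : ℂ) : Δ (u ∘ L) z ≤ 0 := by
    rw [laplacian_comp_linearIsometryEquiv L u, ← planeLaplacian_eq_laplacian]
    exact hsuper _
  have hbdd : BddBelow (range (u ∘ L)) := ⟨0, by rintro _ ⟨z, rfl⟩; exact (hpos _).le⟩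
  intro x y
  have hharm := harmonicOnNhd_of_laplacian_nonpos_of_bddBelow hv hΔ hbdd
  simpa using hharm.apply_eq_apply_of_bddBelow hbdd (L.symm x) (L.symm y)
end
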